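/- arXiv:2503.24303 — 7 statements merged into one kernel-verified Lean document; each statement's English description precedes it below -/
import Mathlib

section
/- For i = 1, 2, let C_i be a linear code of length n over F_q with dimension k_i, generator matrix G_i, and parity check matrix H_i. Let Q be the linear code of length k_2 over F_q generated by the rows of H_1·G_2^T, and let P be a parity check matrix of Q. Then P·G_2 is a generator matrix of the intersection C_1 ∩ C_2 (i.e., the rows of P·G_2 form a basis of C_1 ∩ C_2). -/
/-!
Every code is its own double dual, so `C₁` is the kernel of `H₁`. Hence `x ᵥ* G₂ ∈ C₁` iff
`(H₁ * G₂ᵀ) *ᵥ x = 0`, i.e. the dual of `Q` is the preimage of `C₁` under the injective map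
`x ↦ x ᵥ* G₂`. That map sends the basis given by the rows of `P` to a basis of
`C₁ ∩ range G₂ = C₁ ∩ C₂`, and these images are the rows of `P * G₂`.
-/

open Matrix

/-- Euclidean dual of a linear code of length `n`. -/
def dualCode {F : Type*} [Field F] {n : ℕ} (CC : Submodule F (Fin n → F)) :
    Submodule F (Fin n → F) where
  carrier := {v | ∀ c ∈ CC, ∑ i, c i * v i = 0}
  zero_mem' := by intro c hc; simp
  add_mem' := by
    intro a b ha hb c hc
    simp only [Set.mem_setOf_eq] at *
    simp only [Pi.add_apply, mul_add, Finset.sum_add_distrib, ha c hc, hb c hc, add_zero]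
  smul_mem' := by
    intro r v hv c hc
    simp only [Set.mem_setOf_eq] at *
    have h1 : ∀ i, c i * (r • v) i = r * (c i * v i) := by
      intro i; simp only [Pi.smul_apply, smul_eq_mul]; ring
    simp only [h1, ← Finset.mul_sum, hv c hc, mul_zero]

/-- `G` is a generator matrix of the code `CC`: its rows form a basis of `CC`. -/
def IsGenMat (F : Type*) [Field F] {k n : ℕ} (CC : Submodule F (Fin n → F))
    (G : Matrix (Fin k) (Fin n) F) : Prop :=
  LinearIndependent F (fun i => G i) ∧ Submodule.span F (Set.range (fun i => G i)) = CC

section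

variable {F : Type*} [Field F] {n : ℕ}

theorem dualCode_eq_orthogonal (C : Submodule F (Fin n → F)) :
    dualCode C = (1 : Matrix (Fin n) (Fin n) F).toBilin'.orthogonal C := by
  ext v
  simp [dualCode, Matrix.toBilin'_apply', dotProduct]

theorem dualCode_dualCode (C : Submodule F (Fin n → F)) : dualCode (dualCode C) = C := by
  have hRefl : (1 : Matrix (Fin n) (Fin n) F).toBilin'.IsRefl := fun x y h => by
    simpa [Matrix.toBilin'_apply', dotProduct_comm] using h
  rw [dualCode_eq_orthogonal, dualCode_eq_orthogonal]
  exact LinearMap.BilinForm.orthogonal_orthogonal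
    (LinearMap.BilinForm.nondegenerate_toBilin'_of_det_ne_zero' _ (by simp)) hRefl C

theorem dualCode_span_rows {m : ℕ} (M : Matrix (Fin m) (Fin n) F) :
    dualCode (Submodule.span F (Set.range fun i => M i)) = LinearMap.ker M.mulVecLin := by
  ext v
  rw [dualCode_eq_orthogonal]
  change Submodule.span F _ ≤ LinearMap.ker ((1 : Matrix (Fin n) (Fin n) F).toBilin'.flip v) ↔ _
  rw [Submodule.span_le, Set.range_subset_iff, LinearMap.mem_ker, funext_iff]
  simp [Matrix.toBilin'_apply', mulVec, dotProduct_comm]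

theorem IsGenMat.mul {k t : ℕ} {S : Submodule F (Fin k → F)} {P : Matrix (Fin t) (Fin k) F}
    {G : Matrix (Fin k) (Fin n) F} (hP : IsGenMat F S P) (hG : LinearIndependent F G.row) :
    IsGenMat F (S.map G.vecMulLinear) (P * G) := by
  have hrows : (fun i => (P * G) i) = G.vecMulLinear ∘ fun i => P i := rfl
  refine ⟨?_, ?_⟩
  · rw [hrows]
    exact hP.1.map' _ (LinearMap.ker_eq_bot.mpr (Matrix.vecMul_injective_iff.mpr hG))
  · rw [hrows, Set.range_comp, ← Submodule.map_span, hP.2]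

end

theorem stmt0_general {F : Type*} [Field F] {n k₁ k₂ t : ℕ}
    (C₁ C₂ : Submodule F (Fin n → F))
    (G₂ : Matrix (Fin k₂) (Fin n) F)
    (H₁ : Matrix (Fin (n - k₁)) (Fin n) F)
    (hG₂ : IsGenMat F C₂ G₂)
    (hH₁ : IsGenMat F (dualCode C₁) H₁)
    (P : Matrix (Fin t) (Fin k₂) F)
    (hP : IsGenMat F
      (dualCode (Submodule.span F (Set.range (fun i => (H₁ * G₂.transpose) i)))) P) :
    IsGenMat F (C₁ ⊓ C₂) (P * G₂) := by
  have hC₁ : C₁ = LinearMap.ker H₁.mulVecLin := by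
    rw [← dualCode_span_rows, hH₁.2, dualCode_dualCode]
  have hQ : dualCode (Submodule.span F (Set.range fun i => (H₁ * G₂.transpose) i)) =
      C₁.comap G₂.vecMulLinear := by
    ext x
    rw [dualCode_span_rows, hC₁]
    simp only [LinearMap.mem_ker, Submodule.mem_comap, mulVecLin_apply, vecMulLinear_apply,
      ← mulVec_mulVec, mulVec_transpose]
  have hC₂ : LinearMap.range G₂.vecMulLinear = C₂ := by
    rw [range_vecMulLinear]
    exact hG₂.2
  have h := hP.mul hG₂.1
  rwa [hQ, Submodule.map_comap_eq, hC₂, inf_comm] at h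

/-- For `i = 1,2` let `Cᵢ` be a linear code of length `n` over the finite
field `F` with dimension `kᵢ`, generator matrix `Gᵢ` and parity check matrix `Hᵢ`.  Let `Q`
be the code of length `k₂` generated by the rows of `H₁ * G₂ᵀ` and let `P` be a parity
check matrix of `Q`.  Then `P * G₂` is a generator matrix of `C₁ ⊓ C₂`. -/
theorem stmt0 {F : Type*} [Field F] [Fintype F] {n k₁ k₂ t : ℕ}
    (C₁ C₂ : Submodule F (Fin n → F))
    (hk₁ : Module.finrank F C₁ = k₁) (hk₂ : Module.finrank F C₂ = k₂)
    (G₁ : Matrix (Fin k₁) (Fin n) F) (G₂ : Matrix (Fin k₂) (Fin n) F)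
    (H₁ : Matrix (Fin (n - k₁)) (Fin n) F) (H₂ : Matrix (Fin (n - k₂)) (Fin n) F)
    (hG₁ : IsGenMat F C₁ G₁) (hG₂ : IsGenMat F C₂ G₂)
    (hH₁ : IsGenMat F (dualCode C₁) H₁) (hH₂ : IsGenMat F (dualCode C₂) H₂)
    (P : Matrix (Fin t) (Fin k₂) F)
    (hP : IsGenMat F
      (dualCode (Submodule.span F (Set.range (fun i => (H₁ * G₂.transpose) i)))) P) :
    IsGenMat F (C₁ ⊓ C₂) (P * G₂) :=
  stmt0_general C₁ C₂ G₂ H₁ hG₂ hH₁ P hP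
end

section
/- For i = 1, 2, let C_i be a linear code of length n over F_q with dimension k_i, generator matrix G_i, and parity check matrix H_i. Then C_1 ∩ C_2 = {0} if and only if rank(H_1·G_2^T) = k_2. -/
open Matrix

/-!
`H₁` is a parity check matrix of `C₁`, so its kernel is `C₁`, while `v ↦ G₂ᵀ v` maps `F^{k₂}`
isomorphically onto `C₂`. Hence the kernel of `H₁ G₂ᵀ` is isomorphic to `C₁ ∩ C₂`, and by
rank–nullity `rank (H₁ G₂ᵀ) + dim (C₁ ∩ C₂) = k₂`.
-/

open Module

theorem LinearMap.finrank_range_comp_add_finrank_ker_inf_range {K V W U : Type*} [Field K]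
    [AddCommGroup V] [Module K V] [FiniteDimensional K V] [AddCommGroup W] [Module K W]
    [AddCommGroup U] [Module K U] {f : V →ₗ[K] W} (hf : Function.Injective f) (g : W →ₗ[K] U) :
    finrank K (range (g ∘ₗ f)) + finrank K ↥(ker g ⊓ range f) = finrank K V := by
  have hker : finrank K (ker (g ∘ₗ f)) = finrank K ↥(ker g ⊓ range f) := by
    rw [ker_comp, (Submodule.equivMapOfInjective f hf _).finrank_eq, Submodule.map_comap_eq,
      inf_comm]
  rw [← hker, finrank_range_add_finrank_ker]

namespace IsGenMat

variable {F : Type*} [Field F] {k n : ℕ} {C : Submodule F (Fin n → F)}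

theorem rank_eq {G : Matrix (Fin k) (Fin n) F} (hG : IsGenMat F C G) : G.rank = k := by
  rw [LinearIndependent.rank_matrix hG.1, Fintype.card_fin]

theorem injective_mulVecLin_transpose {G : Matrix (Fin k) (Fin n) F} (hG : IsGenMat F C G) :
    Function.Injective Gᵀ.mulVecLin := by
  rw [Matrix.mulVecLin_transpose, Matrix.coe_vecMulLinear]
  exact Matrix.vecMul_injective_iff.2 hG.1

theorem range_mulVecLin_transpose {G : Matrix (Fin k) (Fin n) F} (hG : IsGenMat F C G) :
    LinearMap.range Gᵀ.mulVecLin = C := by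
  rw [Matrix.mulVecLin_transpose, range_vecMulLinear]
  exact hG.2

theorem rank_mul_transpose_add_finrank_inf {m : ℕ} {G : Matrix (Fin k) (Fin n) F}
    (hG : IsGenMat F C G) (H : Matrix (Fin m) (Fin n) F) :
    (H * Gᵀ).rank + finrank F ↥(LinearMap.ker H.mulVecLin ⊓ C) = k := by
  have h := LinearMap.finrank_range_comp_add_finrank_ker_inf_range
    hG.injective_mulVecLin_transpose H.mulVecLin
  rwa [← Matrix.mulVecLin_mul, hG.range_mulVecLin_transpose, finrank_fin_fun] at h

theorem le_ker_mulVecLin {H : Matrix (Fin k) (Fin n) F} (hH : IsGenMat F (dualCode C) H) :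
    C ≤ LinearMap.ker H.mulVecLin := by
  intro v hv
  ext j
  have hHj : H j ∈ dualCode C := hH.2 ▸ Submodule.subset_span ⟨j, rfl⟩
  simpa [Matrix.mulVec, dotProduct, mul_comm] using hHj v hv

-- `C ≤ ker H`, and both have dimension `k` because the `n - k` rows of `H` are independent.
theorem ker_mulVecLin_eq {H : Matrix (Fin (n - k)) (Fin n) F} (hk : finrank F C = k)
    (hH : IsGenMat F (dualCode C) H) : LinearMap.ker H.mulVecLin = C := by
  have hkn : k ≤ n := hk ▸ (Submodule.finrank_le C).trans_eq (finrank_fin_fun F)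
  have hrank := LinearMap.finrank_range_add_finrank_ker H.mulVecLin
  rw [← Matrix.rank, hH.rank_eq, finrank_fin_fun] at hrank
  refine (Submodule.eq_of_le_of_finrank_eq hH.le_ker_mulVecLin ?_).symm
  omega

end IsGenMat

theorem stmt1_general {F : Type*} [Field F] {n k₁ k₂ : ℕ}
    (C₁ C₂ : Submodule F (Fin n → F))
    (hk₁ : Module.finrank F C₁ = k₁)
    (G₂ : Matrix (Fin k₂) (Fin n) F)
    (H₁ : Matrix (Fin (n - k₁)) (Fin n) F)
    (hG₂ : IsGenMat F C₂ G₂)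
    (hH₁ : IsGenMat F (dualCode C₁) H₁) :
    C₁ ⊓ C₂ = ⊥ ↔ (H₁ * G₂.transpose).rank = k₂ := by
  have h := hG₂.rank_mul_transpose_add_finrank_inf H₁
  rw [hH₁.ker_mulVecLin_eq hk₁] at h
  rw [← Submodule.finrank_eq_zero]
  omega

/-- For `i = 1,2` let `Cᵢ` be a linear code of length `n` over the finite
field `F` with dimension `kᵢ`, generator matrix `Gᵢ` and parity check matrix `Hᵢ`.
Then `C₁ ∩ C₂ = {0}` if and only if `rank (H₁ * G₂ᵀ) = k₂`. -/
theorem stmt1 {F : Type*} [Field F] [Fintype F] {n k₁ k₂ : ℕ}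
    (C₁ C₂ : Submodule F (Fin n → F))
    (hk₁ : Module.finrank F C₁ = k₁) (hk₂ : Module.finrank F C₂ = k₂)
    (G₁ : Matrix (Fin k₁) (Fin n) F) (G₂ : Matrix (Fin k₂) (Fin n) F)
    (H₁ : Matrix (Fin (n - k₁)) (Fin n) F) (H₂ : Matrix (Fin (n - k₂)) (Fin n) F)
    (hG₁ : IsGenMat F C₁ G₁) (hG₂ : IsGenMat F C₂ G₂)
    (hH₁ : IsGenMat F (dualCode C₁) H₁) (hH₂ : IsGenMat F (dualCode C₂) H₂) :
    C₁ ⊓ C₂ = ⊥ ↔ (H₁ * G₂.transpose).rank = k₂ :=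
  stmt1_general C₁ C₂ hk₁ G₂ H₁ hG₂ hH₁
end

section
/- Let q = p^e with p prime, and let 0 ≤ κ < e. For i = 1, 2, let C_i be a linear code of length n over F_q with dimension k_i, generator matrix G_i, and parity check matrix H_i. Let Q be the linear code of length k_2 over F_q generated by the rows of σ^{e−κ}(G_1)·G_2^T, and let P be a parity check matrix of Q. Then P·G_2 is a generator matrix of C_1^{⊥κ} ∩ C_2. In particular, taking C_1 = C_2 = C with generator matrix G, if P is a parity check matrix of the code generated by σ^{e−κ}(G)·G^T, then P·G is a generator matrix of the κ-Galois hull C ∩ C^{⊥κ}. -/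
open Matrix

/-- the κ-Galois dual of a linear code of length `n` over a field of characteristic `p`:
`{v | ∀ c ∈ C, ∑ i, c i * (v i)^(p^κ) = 0}`. -/
def galoisDual (p κ : ℕ) [Fact p.Prime] {F : Type*} [Field F] [CharP F p] {n : ℕ}
    (CC : Submodule F (Fin n → F)) : Submodule F (Fin n → F) where
  carrier := {v | ∀ c ∈ CC, ∑ i, c i * (v i) ^ p ^ κ = 0}
  zero_mem' := by
    intro c hc
    have hp : p ^ κ ≠ 0 := pow_ne_zero κ (Nat.Prime.ne_zero Fact.out)
    simp [zero_pow hp]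
  add_mem' := by
    intro a b ha hb c hc
    haveI : ExpChar F p := ExpChar.prime Fact.out
    simp only [Set.mem_setOf_eq] at *
    have h1 : ∀ i, ((a + b) i) ^ p ^ κ = (a i) ^ p ^ κ + (b i) ^ p ^ κ := by
      intro i; simp only [Pi.add_apply]; exact add_pow_expChar_pow (a i) (b i) p κ
    simp only [h1, mul_add, Finset.sum_add_distrib, ha c hc, hb c hc, add_zero]
  smul_mem' := by
    intro r v hv c hc
    simp only [Set.mem_setOf_eq] at *
    have h1 : ∀ i, c i * ((r • v) i) ^ p ^ κ = r ^ p ^ κ * (c i * (v i) ^ p ^ κ) := by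
      intro i; simp only [Pi.smul_apply, smul_eq_mul, mul_pow]; ring
    simp only [h1, ← Finset.mul_sum, hv c hc, mul_zero]


section Aux

variable {F : Type*} [Field F]

lemma mem_dualCode_span {m n : ℕ} (A : Matrix (Fin m) (Fin n) F) (v : Fin n → F) :
    v ∈ dualCode (Submodule.span F (Set.range fun i => A i)) ↔
      ∀ i, ∑ j, A i j * v j = 0 := by
  constructor
  · intro h i
    exact h (A i) (Submodule.subset_span ⟨i, rfl⟩)
  · intro h c hc
    induction hc using Submodule.span_induction with
    | mem x hx => obtain ⟨i, rfl⟩ := hx; exact h i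
    | zero => simp
    | add x y _ _ hx hy =>
        simp only [Pi.add_apply, add_mul, Finset.sum_add_distrib, hx, hy, add_zero]
    | smul r x _ hx =>
        simp only [Pi.smul_apply, smul_eq_mul, mul_assoc, ← Finset.mul_sum, hx, mul_zero]

lemma mem_galoisDual_span (p κ : ℕ) [Fact p.Prime] [CharP F p] {m n : ℕ}
    (A : Matrix (Fin m) (Fin n) F) (w : Fin n → F) :
    w ∈ galoisDual p κ (Submodule.span F (Set.range fun i => A i)) ↔
      ∀ i, ∑ j, A i j * (w j) ^ p ^ κ = 0 := by
  constructor
  · intro h i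
    exact h (A i) (Submodule.subset_span ⟨i, rfl⟩)
  · intro h c hc
    induction hc using Submodule.span_induction with
    | mem x hx => obtain ⟨i, rfl⟩ := hx; exact h i
    | zero => simp
    | add x y _ _ hx hy =>
        simp only [Pi.add_apply, add_mul, Finset.sum_add_distrib, hx, hy, add_zero]
    | smul r x _ hx =>
        simp only [Pi.smul_apply, smul_eq_mul, mul_assoc, ← Finset.mul_sum, hx, mul_zero]

end Aux

/-- Let `q = p^e`, `0 ≤ κ < e`.  For `i = 1,2` let `Cᵢ` be a linear code
of length `n` over `F = F_q` with generator matrix `Gᵢ` and parity check matrix `Hᵢ`.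
Let `Q` be the code of length `k₂` generated by the rows of `σ^{e-κ}(G₁) * G₂ᵀ`
(where `σ` is the Frobenius `a ↦ a^p`, applied entrywise) and `P` a parity check matrix
of `Q`.  Then `P * G₂` is a generator matrix of `C₁^{⊥κ} ⊓ C₂`.  (Taking `C₁ = C₂` gives
a generator matrix of the κ-Galois hull.) -/
theorem stmt2 {p e : ℕ} [Fact p.Prime] {F : Type*} [Field F] [Fintype F] [CharP F p]
    (hcard : Fintype.card F = p ^ e) {κ : ℕ} (hκ : κ < e)
    {n k₁ k₂ t : ℕ} (C₁ C₂ : Submodule F (Fin n → F))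
    (hk₁ : Module.finrank F C₁ = k₁) (hk₂ : Module.finrank F C₂ = k₂)
    (G₁ : Matrix (Fin k₁) (Fin n) F) (G₂ : Matrix (Fin k₂) (Fin n) F)
    (H₁ : Matrix (Fin (n - k₁)) (Fin n) F) (H₂ : Matrix (Fin (n - k₂)) (Fin n) F)
    (hG₁ : IsGenMat F C₁ G₁) (hG₂ : IsGenMat F C₂ G₂)
    (hH₁ : IsGenMat F (dualCode C₁) H₁) (hH₂ : IsGenMat F (dualCode C₂) H₂)
    (P : Matrix (Fin t) (Fin k₂) F)
    (hP : IsGenMat F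
      (dualCode (Submodule.span F (Set.range
        (fun i => ((G₁.map (fun a => a ^ p ^ (e - κ))) * G₂.transpose) i)))) P) :
    IsGenMat F (galoisDual p κ C₁ ⊓ C₂) (P * G₂) := by
  classical
  haveI : ExpChar F p := ExpChar.prime Fact.out
  obtain ⟨hG₁ind, hG₁span⟩ := hG₁
  obtain ⟨hG₂ind, hG₂span⟩ := hG₂
  obtain ⟨hPind, hPspan⟩ := hP
  set M : Matrix (Fin k₁) (Fin k₂) F := (G₁.map (fun a => a ^ p ^ (e - κ))) * G₂.transpose
    with hMdef
  set φ : (Fin k₂ → F) →ₗ[F] (Fin n → F) := G₂.vecMulLinear with hφdef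
  have hpκ : p ^ κ ≠ 0 := pow_ne_zero _ (Nat.Prime.ne_zero Fact.out)
  have hφ : ∀ (v : Fin k₂ → F) (l : Fin n), φ v l = ∑ j, v j * G₂ j l := by
    intro v l
    simp [hφdef, Matrix.vecMulLinear_apply, Matrix.vecMul, dotProduct]
  have hφsum : ∀ v : Fin k₂ → F, φ v = ∑ j, v j • G₂ j := by
    intro v; ext l
    simp [hφ, Finset.sum_apply]
  have hφker : LinearMap.ker φ = ⊥ := by
    rw [LinearMap.ker_eq_bot']
    intro v hv
    have h0 : ∑ j, v j • G₂ j = 0 := by rw [← hφsum]; exact hv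
    have := Fintype.linearIndependent_iff.mp hG₂ind v h0
    ext j; exact this j
  have hφC₂ : ∀ v, φ v ∈ C₂ := by
    intro v
    rw [← hG₂span, hφsum]
    exact Submodule.sum_mem _ fun j _ => Submodule.smul_mem _ _ (Submodule.subset_span ⟨j, rfl⟩)
  have hfrob : ∀ a : F, (a ^ p ^ (e - κ)) ^ p ^ κ = a := by
    intro a
    rw [← pow_mul, ← pow_add, Nat.sub_add_cancel hκ.le, ← hcard, FiniteField.pow_card]
  have hkey : ∀ (v : Fin k₂ → F) (i : Fin k₁),
      (∑ j, M i j * v j) ^ p ^ κ = ∑ l, G₁ i l * (φ v l) ^ p ^ κ := by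
    intro v i
    rw [sum_pow_char_pow]
    have h1 : ∀ j, (M i j * v j) ^ p ^ κ = ∑ l, G₁ i l * ((G₂ j l) ^ p ^ κ * (v j) ^ p ^ κ) := by
      intro j
      rw [mul_pow, hMdef, Matrix.mul_apply]
      simp only [Matrix.map_apply, Matrix.transpose_apply]
      rw [sum_pow_char_pow, Finset.sum_mul]
      refine Finset.sum_congr rfl fun l _ => ?_
      rw [mul_pow, hfrob]
      ring
    simp only [h1]
    rw [Finset.sum_comm]
    refine Finset.sum_congr rfl fun l _ => ?_
    rw [← Finset.mul_sum, hφ, sum_pow_char_pow]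
    congr 1
    refine Finset.sum_congr rfl fun j _ => ?_
    rw [mul_pow]
    ring
  have hQiff : ∀ v : Fin k₂ → F,
      v ∈ dualCode (Submodule.span F (Set.range fun i => M i)) ↔ φ v ∈ galoisDual p κ C₁ := by
    intro v
    rw [mem_dualCode_span, ← hG₁span, mem_galoisDual_span]
    refine forall_congr' fun i => ?_
    rw [← hkey v i]
    constructor
    · intro h; rw [h]; exact zero_pow hpκ
    · intro h; exact pow_eq_zero_iff hpκ |>.mp h
  have hrows : (fun i => (P * G₂) i) = fun i => φ (P i) := by
    ext i l
    rw [hφ]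
    simp [Matrix.mul_apply]
  constructor
  · rw [hrows]
    exact hPind.map' φ hφker
  · rw [hrows]
    have himg : Set.range (fun i => φ (P i)) = φ '' Set.range (fun i => P i) := by
      rw [← Set.range_comp]; rfl
    rw [himg, Submodule.span_image, hPspan]
    ext w
    simp only [Submodule.mem_map, Submodule.mem_inf]
    constructor
    · rintro ⟨v, hv, rfl⟩
      exact ⟨(hQiff v).mp hv, hφC₂ v⟩
    · rintro ⟨hw1, hw2⟩
      have hw2' : w ∈ LinearMap.range φ := by
        rw [hφdef, range_vecMulLinear]
        exact hG₂span ▸ hw2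
      obtain ⟨v, hv⟩ := hw2'
      exact ⟨v, (hQiff v).mpr (hv ▸ hw1), hv⟩
end

section
/- Let C_1 be a Λ-MT code and C_2 a Δ-MT code over F_q, both with block lengths (m_1,…,m_ℓ). Suppose C_1 ∩ C_2 is a Γ-MT code with block lengths (m_1,…,m_ℓ) for some tuple Γ of nonzero constants, and that C_1 ∩ C_2 is not Λ-MT. Then the minimum Hamming distance of C_1 satisfies d(C_1) ≤ D(Λ−Γ), where D(Λ−Γ) is the number of indices i with λ_i ≠ γ_i; in particular d(C_1) ≤ ℓ. -/
open Polynomial Matrix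

/-- constacyclic shift with constant `lam` on one block of length `m`:
`(a₀, …, a_{m-1}) ↦ (lam * a_{m-1}, a₀, …, a_{m-2})`. -/
def blockShift {F : Type*} [Field F] (lam : F) {m : ℕ} (a : Fin m → F) : Fin m → F :=
  fun j => if j.val = 0 then lam * a ⟨m - 1, by have := j.isLt; omega⟩
           else a ⟨j.val - 1, by have := j.isLt; omega⟩

/-- `CC ⊆ ⊕ᵢ F^{m i}` is a Λ-multi-twisted code: it is invariant under the blockwise
constacyclic shift `T_Λ`. -/
def IsMT {F : Type*} [Field F] {ℓ : ℕ} (lam : Fin ℓ → F) {m : Fin ℓ → ℕ}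
    (CC : Submodule F (∀ i, Fin (m i) → F)) : Prop :=
  ∀ v ∈ CC, (fun i => blockShift (lam i) (v i)) ∈ CC

/-- Hamming weight of a blocked vector. -/
def wt {F : Type*} [Field F] [DecidableEq F] {ℓ : ℕ} {m : Fin ℓ → ℕ}
    (v : ∀ i, Fin (m i) → F) : ℕ :=
  ∑ i, (Finset.univ.filter fun j => v i j ≠ 0).card

/-- Let `C₁` be Λ-MT and `C₂` be Δ-MT with the same block lengths, and
suppose `C₁ ∩ C₂` is Γ-MT for some tuple `Γ` of nonzero constants but is not Λ-MT.  Then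
the minimum distance of `C₁` is at most `D(Λ-Γ)`, the number of indices where `Λ` and `Γ`
differ; in particular it is at most `ℓ`. -/
theorem stmt9 {F : Type*} [Field F] [Fintype F] [DecidableEq F] {ℓ : ℕ} {m : Fin ℓ → ℕ}
    (hm : ∀ i, 0 < m i) {lam delta gamma : Fin ℓ → F}
    (hlam : ∀ i, lam i ≠ 0) (hdelta : ∀ i, delta i ≠ 0) (hgamma : ∀ i, gamma i ≠ 0)
    (C₁ C₂ : Submodule F (∀ i, Fin (m i) → F))
    (hC₁ : IsMT lam C₁) (hC₂ : IsMT delta C₂)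
    (hΓ : IsMT gamma (C₁ ⊓ C₂)) (hnot : ¬ IsMT lam (C₁ ⊓ C₂)) :
    ∃ v ∈ C₁, v ≠ 0 ∧ wt v ≤ (Finset.univ.filter fun i => lam i ≠ gamma i).card ∧
      wt v ≤ ℓ := by
  unfold IsMT at hnot
  push_neg at hnot
  obtain ⟨v, hv, hT⟩ := hnot
  set w : ∀ i, Fin (m i) → F :=
    (fun i => blockShift (lam i) (v i)) - (fun i => blockShift (gamma i) (v i)) with hw
  have hwC₁ : w ∈ C₁ := C₁.sub_mem (hC₁ v hv.1) (hΓ v hv).1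
  have hwne : w ≠ 0 := by
    intro h
    apply hT
    have heq : (fun i => blockShift (lam i) (v i)) = (fun i => blockShift (gamma i) (v i)) :=
      sub_eq_zero.mp h
    rw [heq]
    exact hΓ v hv
  have hblock : ∀ i (j : Fin (m i)), j.val ≠ 0 → w i j = 0 := by
    intro i j hj
    simp only [hw, Pi.sub_apply, blockShift, if_neg hj, sub_self]
  have hcard : ∀ i, (Finset.univ.filter fun j => w i j ≠ 0).card ≤
      if lam i ≠ gamma i then 1 else 0 := by
    intro i
    by_cases h : lam i = gamma i
    · simp only [h, ne_eq, not_true_eq_false, if_false, Nat.le_zero, Finset.card_eq_zero,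
        Finset.filter_eq_empty_iff]
      intro j _
      by_cases hj : j.val = 0
      · simp only [hw, Pi.sub_apply, blockShift, if_pos hj, h, sub_self, ne_eq,
          not_not]
      · simp [hblock i j hj]
    · simp only [ne_eq, h, not_false_eq_true, if_true]
      have : (Finset.univ.filter fun j => w i j ≠ 0) ⊆
          {⟨0, hm i⟩} := by
        intro j hj
        simp only [Finset.mem_filter] at hj
        simp only [Finset.mem_singleton]
        by_contra hj0
        exact hj.2 (hblock i j (fun h0 => hj0 (Fin.ext h0)))
      calc _ ≤ ({⟨0, hm i⟩} : Finset (Fin (m i))).card := Finset.card_le_card this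
        _ = 1 := Finset.card_singleton _
  refine ⟨w, hwC₁, hwne, ?_, ?_⟩
  · calc wt w ≤ ∑ i, if lam i ≠ gamma i then 1 else 0 := Finset.sum_le_sum fun i _ => hcard i
      _ = (Finset.univ.filter fun i => lam i ≠ gamma i).card := by
          rw [Finset.card_filter]
  · calc wt w ≤ ∑ i, if lam i ≠ gamma i then 1 else 0 := Finset.sum_le_sum fun i _ => hcard i
      _ ≤ ∑ _i : Fin ℓ, 1 := Finset.sum_le_sum fun i _ => by split <;> omega
      _ = ℓ := by simp
end

section
/- Let Λ = (λ_1,…,λ_ℓ) and Δ = (δ_1,…,δ_ℓ) be tuples of nonzero elements of F_q, and let C_1 be a Λ-MT code and C_2 a Δ-MT code, both with block lengths (m_1,…,m_ℓ), with minimum Hamming distances d(C_1) > ℓ and d(C_2) > ℓ. Then C_1 ∩ C_2 admits an MT structure with block lengths (m_1,…,m_ℓ) (i.e., is Γ-MT for some tuple Γ of nonzero constants) if and only if for every index 1 ≤ i ≤ ℓ with λ_i ≠ δ_i, every codeword of C_1 ∩ C_2 has its i-th block equal to zero. In particular, if λ_i ≠ δ_i for all i = 1,…,ℓ, then C_1 ∩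 C_2 admits an MT structure with block lengths (m_1,…,m_ℓ) if and only if C_1 ∩ C_2 = {0}. -/
open Polynomial Matrix

lemma blockShift_sub_apply {F : Type*} [Field F] (a b : F) {m : ℕ} (v : Fin m → F) (j : Fin m) :
    blockShift a v j - blockShift b v j =
      if j.val = 0 then (a - b) * v ⟨m - 1, by have := j.isLt; omega⟩ else 0 := by
  unfold blockShift; split <;> ring

lemma last_zero {F : Type*} [Field F] [DecidableEq F] {ℓ : ℕ} {m : Fin ℓ → ℕ}
    (hm : ∀ i, 0 < m i) {lam gamma : Fin ℓ → F}
    {C S : Submodule F (∀ i, Fin (m i) → F)}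
    (hSC : S ≤ C) (hC : IsMT lam C) (hS : IsMT gamma S)
    (hd : ∀ v ∈ C, v ≠ 0 → ℓ < wt v)
    {v : ∀ i, Fin (m i) → F} (hv : v ∈ S) {i : Fin ℓ} (hne : lam i ≠ gamma i) :
    v i ⟨m i - 1, Nat.sub_lt (hm i) Nat.one_pos⟩ = 0 := by
  set u : ∀ i, Fin (m i) → F :=
    (fun i => blockShift (lam i) (v i)) - (fun i => blockShift (gamma i) (v i)) with hu
  have huC : u ∈ C := Submodule.sub_mem C (hC v (hSC hv)) (hSC (hS v hv))
  have hua : ∀ i' (j : Fin (m i')), u i' j =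
      if j.val = 0 then (lam i' - gamma i') * v i' ⟨m i' - 1, by have := j.isLt; omega⟩
      else 0 := by
    intro i' j
    simp only [hu, Pi.sub_apply]
    exact blockShift_sub_apply _ _ _ _
  have hwt : wt u ≤ ℓ := by
    unfold wt
    calc ∑ i', (Finset.univ.filter fun j => u i' j ≠ 0).card
        ≤ ∑ _i' : Fin ℓ, 1 := by
          apply Finset.sum_le_sum
          intro i' _
          have hsub : (Finset.univ.filter fun j => u i' j ≠ 0) ⊆ {⟨0, hm i'⟩} := by
            intro j hj
            simp only [Finset.mem_filter, Finset.mem_singleton] at *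
            by_contra hj0
            apply hj.2
            rw [hua i' j, if_neg (fun h => hj0 (Fin.ext h))]
          calc _ ≤ ({⟨0, hm i'⟩} : Finset (Fin (m i'))).card := Finset.card_le_card hsub
            _ = 1 := Finset.card_singleton _
      _ = ℓ := by simp
  have hu0 : u = 0 := by
    by_contra h
    have := hd u huC h
    omega
  have h0 : u i ⟨0, hm i⟩ = 0 := by rw [hu0]; rfl
  rw [hua] at h0
  simp only [if_pos rfl] at h0
  rcases mul_eq_zero.mp h0 with h | h
  · exact absurd (sub_eq_zero.mp h) hne
  · exact h

/-- Let `C₁` be Λ-MT and `C₂` be Δ-MT with the same block lengths, with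
minimum distances `> ℓ`.  Then `C₁ ∩ C₂` admits an MT structure with these block lengths
iff for every index `i` with `λᵢ ≠ δᵢ` every codeword of `C₁ ∩ C₂` has zero `i`-th block.
In particular, if `λᵢ ≠ δᵢ` for all `i` then `C₁ ∩ C₂` admits an MT structure iff
`C₁ ∩ C₂ = {0}`. -/
theorem stmt10 {F : Type*} [Field F] [Fintype F] [DecidableEq F] {ℓ : ℕ} {m : Fin ℓ → ℕ}
    (hm : ∀ i, 0 < m i) {lam delta : Fin ℓ → F}
    (hlam : ∀ i, lam i ≠ 0) (hdelta : ∀ i, delta i ≠ 0)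
    (C₁ C₂ : Submodule F (∀ i, Fin (m i) → F))
    (hC₁ : IsMT lam C₁) (hC₂ : IsMT delta C₂)
    (hd₁ : ∀ v ∈ C₁, v ≠ 0 → ℓ < wt v) (hd₂ : ∀ v ∈ C₂, v ≠ 0 → ℓ < wt v) :
    ((∃ gamma : Fin ℓ → F, (∀ i, gamma i ≠ 0) ∧ IsMT gamma (C₁ ⊓ C₂)) ↔
      ∀ i, lam i ≠ delta i → ∀ v ∈ C₁ ⊓ C₂, v i = 0) ∧
    ((∀ i, lam i ≠ delta i) →
      ((∃ gamma : Fin ℓ → F, (∀ i, gamma i ≠ 0) ∧ IsMT gamma (C₁ ⊓ C₂)) ↔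
        C₁ ⊓ C₂ = ⊥)) := by
  have main : (∃ gamma : Fin ℓ → F, (∀ i, gamma i ≠ 0) ∧ IsMT gamma (C₁ ⊓ C₂)) ↔
      ∀ i, lam i ≠ delta i → ∀ v ∈ C₁ ⊓ C₂, v i = 0 := by
    constructor
    · rintro ⟨gamma, _, hS⟩ i hi v hv
      have key : ∀ w ∈ C₁ ⊓ C₂, w i ⟨m i - 1, Nat.sub_lt (hm i) Nat.one_pos⟩ = 0 := by
        intro w hw
        by_cases hlg : lam i = gamma i
        · exact last_zero hm inf_le_right hC₂ hS hd₂ hw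
            (fun h => hi (hlg.trans h.symm))
        · exact last_zero hm inf_le_left hC₁ hS hd₁ hw hlg
      have step : ∀ t : ℕ, ∀ j : Fin (m i), m i - 1 - j.val ≤ t →
          ∀ w ∈ C₁ ⊓ C₂, w i j = 0 := by
        intro t
        induction t with
        | zero =>
          intro j hj w hw
          have hjv : j.val = m i - 1 := by have := j.isLt; omega
          have hj' : j = ⟨m i - 1, Nat.sub_lt (hm i) Nat.one_pos⟩ := Fin.ext hjv
          rw [hj']; exact key w hw
        | succ t ih =>
          intro j hj w hw
          by_cases h : m i - 1 - j.val ≤ t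
          · exact ih j h w hw
          · have hjlt : j.val + 1 < m i := by have := j.isLt; omega
            have hw' := hS w hw
            have h2 := ih ⟨j.val + 1, hjlt⟩ (by show m i - 1 - (j.val + 1) ≤ t; omega) _ hw'
            simp only [blockShift] at h2
            rw [if_neg (by simp)] at h2
            simpa using h2
      funext j
      exact step (m i) j (by omega) v hv
    · intro h
      refine ⟨lam, hlam, ?_⟩
      intro v hv
      rw [Submodule.mem_inf] at hv ⊢
      refine ⟨hC₁ v hv.1, ?_⟩
      have heq : (fun i => blockShift (lam i) (v i)) =
          (fun i => blockShift (delta i) (v i)) := by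
        funext i
        by_cases hld : lam i = delta i
        · rw [hld]
        · have hvi : v i = 0 := h i hld v (Submodule.mem_inf.mpr hv)
          funext j
          simp [blockShift, hvi]
      rw [heq]
      exact hC₂ v hv.2
  refine ⟨main, fun hall => ?_⟩
  rw [main]
  constructor
  · intro h
    rw [Submodule.eq_bot_iff]
    intro v hv
    funext i
    rw [h i (hall i) v hv]
    rfl
  · intro h i _ v hv
    rw [h, Submodule.mem_bot] at hv
    rw [hv]
    rfl
end

section
/- Let C_1 and C_2 be Λ-MT codes over F_q with index ℓ, block lengths (m_1,…,m_ℓ), GPMs G_1 and G_2, and polynomial matrices A_1, A_2 satisfying the identical equations A_i·G_i = diag(x^{m_1}−λ_1,…,x^{m_ℓ}−λ_ℓ). Let N = lcm(t_1 m_1,…,t_ℓ m_ℓ), where t_i is the multiplicative order of λ_i. Let Q be the QC code over F_q with index ℓ and co-index N generated by the rows of the stacked polynomial matrix [A_1^T·diag((x^N−1)/(x^{m_i}−λ_i))·G_2^T ; (x^N−1)·I_ℓ], let Q be a GPM of Q, and let P be the polynomial matrix satisfying P·Q = (x^N−1)·I_ℓ. Then P^T·G_2 is a GPM of the Λ-MT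 code C_1 ∩ C_2. -/
open Polynomial Matrix

/-- from a polynomial vector in `(F[x])^ℓ` to a blocked vector: reduce component `i`
modulo `x^{m i} - λᵢ` and take the coefficients. -/
noncomputable def toCode {F : Type*} [Field F] {ℓ : ℕ} (lam : Fin ℓ → F) (m : Fin ℓ → ℕ)
    (q : Fin ℓ → Polynomial F) : ∀ i, Fin (m i) → F :=
  fun i j => ((q i) %ₘ (X ^ (m i) - Polynomial.C (lam i))).coeff j

/-- `G` is a generator polynomial matrix (GPM) of the Λ-MT code `CC`: its rows form a
minimal generating set (equivalently, since the corresponding submodule of `(F[x])^ℓ` has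
rank `ℓ`, a linearly independent generating set) of the `F[x]`-submodule of `(F[x])^ℓ`
corresponding to `CC`, namely `{q | toCode lam m q ∈ CC}`. -/
def IsGPM {F : Type*} [Field F] {ℓ : ℕ} (lam : Fin ℓ → F) (m : Fin ℓ → ℕ)
    (CC : Submodule F (∀ i, Fin (m i) → F))
    (G : Matrix (Fin ℓ) (Fin ℓ) (Polynomial F)) : Prop :=
  LinearIndependent (Polynomial F) (fun i => G i) ∧
  (Submodule.span (Polynomial F) (Set.range (fun i => G i)) :
      Set (Fin ℓ → Polynomial F)) = {q | toCode lam m q ∈ CC}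

/-- the blocked code generated by a family of polynomial vectors: the image under
`toCode` of the `F[x]`-span of the family. -/
noncomputable def genCode {F : Type*} [Field F] {ℓ : ℕ} (lam : Fin ℓ → F) (m : Fin ℓ → ℕ)
    {ι : Type*} (rows : ι → (Fin ℓ → Polynomial F)) : Submodule F (∀ i, Fin (m i) → F) :=
  Submodule.span F
    (toCode lam m '' (Submodule.span (Polynomial F) (Set.range rows) :
      Set (Fin ℓ → Polynomial F)))

/-! With `H = diag(δ) * A₁` one has `H * G₁ = G₁ * H = (x^N - 1) • 1`, so `v` lies in the row
span of `G₁` iff `x^N - 1` divides every entry of `v ᵥ* H`. Likewise `P * Qm = (x^N - 1) • 1`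
says that `a` lies in the row span of `Pᵀ` iff `x^N - 1` divides every entry of `Qm *ᵥ a`;
as the row span of `Qm` is that of `(G₂ * H)ᵀ` plus all multiples of `x^N - 1`, this means
that `x^N - 1` divides every entry of `(a ᵥ* G₂) ᵥ* H`, i.e. `a ᵥ* G₂ ∈ rowspan G₁`. Hence
the row span of `Pᵀ * G₂`, which is `{a ᵥ* G₂ | a ∈ rowspan Pᵀ}`, is `rowspan G₁ ∩ rowspan G₂`. -/

namespace Matrix

open Submodule Set

section CommRing

variable {R l m n : Type*} [CommRing R]

lemma mem_span_range_row_iff [Fintype m] {M : Matrix m n R} {v : n → R} :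
    v ∈ span R (range M.row) ↔ ∃ c, c ᵥ* M = v := by
  rw [← range_vecMulLinear]
  rfl

lemma span_range_row_mul [Fintype l] [Fintype m] (B : Matrix l m R) (G : Matrix m n R) :
    span R (range (B * G).row) = (span R (range B.row)).map G.vecMulLinear := by
  rw [← range_vecMulLinear, ← range_vecMulLinear, ← LinearMap.range_comp]
  congr 1
  exact LinearMap.ext fun v => (vecMul_vecMul v B G).symm

lemma forall_dvd_mulVec_iff_forall_mem_span [Fintype n] {k : Type*} (X : Matrix k n R)
    (a : n → R) (c : R) :
    (∀ i, c ∣ (X *ᵥ a) i) ↔ ∀ x ∈ span R (range X.row), c ∣ x ⬝ᵥ a := by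
  refine ⟨fun h x hx => ?_, fun h i => h _ (subset_span ⟨i, rfl⟩)⟩
  induction hx using span_induction with
  | mem x hx => obtain ⟨i, rfl⟩ := hx; exact h i
  | zero => simp
  | add x y _ _ hx hy => rw [add_dotProduct]; exact dvd_add hx hy
  | smul r x _ hx => rw [smul_dotProduct, smul_eq_mul]; exact hx.mul_left r

lemma forall_dvd_mulVec_iff_of_span_range_row_eq [Fintype n] [DecidableEq n] {k : Type*}
    [Fintype k] {X : Matrix m n R} {Y : Matrix k n R} {c : R}
    (h : span R (range X.row) = span R (range (fromRows Y (c • (1 : Matrix n n R))).row))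
    (a : n → R) :
    (∀ i, c ∣ (X *ᵥ a) i) ↔ ∀ i, c ∣ (Y *ᵥ a) i := by
  rw [forall_dvd_mulVec_iff_forall_mem_span, h, ← forall_dvd_mulVec_iff_forall_mem_span,
    fromRows_mulVec, Sum.forall]
  simp only [Sum.elim_inl, Sum.elim_inr, smul_mulVec, one_mulVec, Pi.smul_apply, smul_eq_mul,
    dvd_mul_right, implies_true, and_true]

lemma mem_span_range_row_fromRows_smul_one [Fintype n] [DecidableEq n] {k : Type*} [Fintype k]
    (Y : Matrix k n R) {c : R} {v : n → R} (hv : ∀ i, c ∣ v i) :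
    v ∈ span R (range (fromRows Y (c • (1 : Matrix n n R))).row) := by
  choose b hb using hv
  refine mem_span_range_row_iff.mpr ⟨Sum.elim 0 b, ?_⟩
  ext i
  simp [hb, vecMul_smul]

lemma mul_eq_smul_one_comm [Fintype n] [DecidableEq n] {G H : Matrix n n R}
    (hG : G.Nonsingular) {c : R} (h : H * G = c • 1) : G * H = c • 1 :=
  isRightRegular_iff_nonsingular.mpr hG <| by
    simp only [Matrix.mul_assoc, h, Matrix.mul_smul, Matrix.smul_mul, Matrix.mul_one,
      Matrix.one_mul]

end CommRing

section IsDomain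

variable {R n : Type*} [CommRing R] [IsDomain R] [Fintype n] [DecidableEq n]

lemma nonsingular_of_mul_eq_smul_one {P Q : Matrix n n R} {c : R} (hc : c ≠ 0)
    (h : P * Q = c • 1) : P.Nonsingular ∧ Q.Nonsingular := by
  refine nonsingular_mul_iff.mp (h ▸ nonsingular_iff_det_ne_zero.mpr ?_)
  simpa [det_smul] using pow_ne_zero _ hc

lemma mem_span_range_row_iff_forall_dvd {G H : Matrix n n R} {c : R} (hc : c ≠ 0)
    (hGH : G * H = c • 1) (hHG : H * G = c • 1) {v : n → R} :
    v ∈ span R (range G.row) ↔ ∀ j, c ∣ (v ᵥ* H) j := by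
  rw [mem_span_range_row_iff]
  constructor
  · rintro ⟨b, rfl⟩ j
    rw [vecMul_vecMul, hGH, vecMul_smul, vecMul_one]
    exact dvd_mul_right c (b j)
  · intro h
    choose b hb using h
    refine ⟨b, smul_right_injective _ hc ?_⟩
    calc c • b ᵥ* G = (v ᵥ* H) ᵥ* G := by
          rw [← smul_vecMul]; congr; funext j; exact (hb j).symm
      _ = c • v := by rw [vecMul_vecMul, hHG, vecMul_smul, vecMul_one]

theorem span_range_row_transpose_mul_eq_inf {G₁ G₂ H P Q : Matrix n n R} {c : R} (hc : c ≠ 0)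
    (hG₁ : G₁.Nonsingular) (hHG₁ : H * G₁ = c • 1) (hPQ : P * Q = c • 1)
    (hQ : span R (range Q.row) =
      span R (range (fromRows (G₂ * H)ᵀ (c • (1 : Matrix n n R))).row)) :
    span R (range (Pᵀ * G₂).row) = span R (range G₁.row) ⊓ span R (range G₂.row) := by
  have hQP : Q * P = c • 1 :=
    mul_eq_smul_one_comm (nonsingular_of_mul_eq_smul_one hc hPQ).2 hPQ
  have hPt : ∀ a, a ∈ span R (range Pᵀ.row) ↔ a ᵥ* G₂ ∈ span R (range G₁.row) := by
    intro a
    rw [mem_span_range_row_iff_forall_dvd hc (H := Qᵀ)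
        (by rw [← transpose_mul, hQP, transpose_smul, transpose_one])
        (by rw [← transpose_mul, hPQ, transpose_smul, transpose_one]),
      mem_span_range_row_iff_forall_dvd hc (mul_eq_smul_one_comm hG₁ hHG₁) hHG₁]
    simp only [vecMul_transpose]
    rw [forall_dvd_mulVec_iff_of_span_range_row_eq hQ, mulVec_transpose, vecMul_vecMul]
  ext v
  rw [span_range_row_mul, mem_map, mem_inf, mem_span_range_row_iff (M := G₂)]
  simp only [vecMulLinear_apply, hPt]
  constructor
  · rintro ⟨a, ha, rfl⟩
    exact ⟨ha, a, rfl⟩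
  · rintro ⟨hv, a, rfl⟩
    exact ⟨a, hv, rfl⟩

end IsDomain

end Matrix

lemma Polynomial.X_pow_sub_C_dvd_X_pow_sub_one {R : Type*} [CommRing R] {a : R} {m N : ℕ}
    (h : orderOf a * m ∣ N) : X ^ m - C a ∣ X ^ N - 1 := by
  have h₁ : X ^ m - C a ∣ X ^ (m * orderOf a) - 1 := by
    simpa [← pow_mul, ← map_pow, pow_orderOf_eq_one] using
      sub_dvd_pow_sub_pow (X ^ m) (C a) (orderOf a)
  exact h₁.trans (dvd_pow_sub_one_of_dvd (mul_comm m _ ▸ h))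

lemma Finset.lcm_orderOf_mul_pos {F ι : Type*} [Field F] [Finite F] (s : Finset ι)
    {lam : ι → F} {m : ι → ℕ} (hlam : ∀ i, lam i ≠ 0) (hm : ∀ i, 0 < m i) :
    0 < s.lcm fun i => orderOf (lam i) * m i := by
  refine Nat.pos_of_ne_zero fun h => ?_
  obtain ⟨i, -, hi⟩ := Finset.lcm_eq_zero_iff.mp h
  exact (Nat.mul_pos (hlam i).isUnit.isOfFinOrder.orderOf_pos (hm i)).ne' hi

section Codes

open Submodule Set

variable {F : Type*} [Field F] {ℓ : ℕ} (lam : Fin ℓ → F) (m : Fin ℓ → ℕ)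

noncomputable def toCodeLinearMap : (Fin ℓ → F[X]) →ₗ[F] ∀ i, Fin (m i) → F where
  toFun := toCode lam m
  map_add' p q := by
    funext i j
    simp [toCode, add_modByMonic]
  map_smul' c q := by
    funext i j
    simp [toCode, smul_modByMonic]

lemma genCode_eq_map {ι : Type*} (rows : ι → Fin ℓ → F[X]) :
    genCode lam m rows =
      ((span F[X] (range rows)).restrictScalars F).map (toCodeLinearMap lam m) :=
  (span_image (toCodeLinearMap lam m)).trans <|
    congrArg _ (span_eq ((span F[X] (range rows)).restrictScalars F))

variable {lam m}

lemma toCode_eq_zero_iff (hm : ∀ i, 0 < m i) {q : Fin ℓ → F[X]} :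
    toCode lam m q = 0 ↔ ∀ i, X ^ m i - C (lam i) ∣ q i := by
  simp only [funext_iff, toCode, Pi.zero_apply]
  refine forall_congr' fun i => ?_
  rw [← modByMonic_eq_zero_iff_dvd (monic_X_pow_sub_C _ (hm i).ne')]
  refine ⟨fun h => ?_, fun h j => by simp [h]⟩
  ext k
  by_cases hk : k < m i
  · exact h ⟨k, hk⟩
  · refine coeff_eq_zero_of_degree_lt ((degree_modByMonic_lt _
      (monic_X_pow_sub_C _ (hm i).ne')).trans_le ?_)
    rw [degree_X_pow_sub_C (hm i)]
    exact_mod_cast not_lt.mp hk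

lemma toCode_mem_genCode_iff (hm : ∀ i, 0 < m i) {ι : Type*} (rows : ι → Fin ℓ → F[X])
    (hker : ∀ q : Fin ℓ → F[X], (∀ i, X ^ m i - C (lam i) ∣ q i) → q ∈ span F[X] (range rows))
    (q : Fin ℓ → F[X]) :
    toCode lam m q ∈ genCode lam m rows ↔ q ∈ span F[X] (range rows) := by
  rw [genCode_eq_map, mem_map]
  refine ⟨fun ⟨p, hp, hpq⟩ => ?_, fun hq => ⟨q, hq, rfl⟩⟩
  have hqp : q - p ∈ span F[X] (range rows) := by
    refine hker _ ((toCode_eq_zero_iff hm).mp ?_)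
    change toCodeLinearMap lam m (q - p) = 0
    rw [map_sub, hpq]
    exact sub_self _
  simpa using add_mem hqp hp

end Codes

theorem stmt11_general {F : Type*} [Field F] [Fintype F] {ℓ : ℕ} {m : Fin ℓ → ℕ}
    (hm : ∀ i, 0 < m i) {lam : Fin ℓ → F} (hlam : ∀ i, lam i ≠ 0)
    (C₁ C₂ : Submodule F (∀ i, Fin (m i) → F))
    (G₁ G₂ A₁ : Matrix (Fin ℓ) (Fin ℓ) (Polynomial F))
    (hG₁ : IsGPM lam m C₁ G₁) (hG₂ : IsGPM lam m C₂ G₂)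
    (hA₁ : A₁ * G₁ = Matrix.diagonal (fun i => X ^ (m i) - Polynomial.C (lam i)))
    {N : ℕ} (hN : N = Finset.univ.lcm (fun i => orderOf (lam i) * m i))
    (Qm P : Matrix (Fin ℓ) (Fin ℓ) (Polynomial F))
    (hQ : IsGPM (fun _ => (1 : F)) (fun _ => N)
      (genCode (fun _ => (1 : F)) (fun _ => N)
        (fun r : Fin ℓ ⊕ Fin ℓ =>
          Matrix.fromRows
            (A₁.transpose *
              Matrix.diagonal (fun i => (X ^ N - 1) / (X ^ (m i) - Polynomial.C (lam i))) *
              G₂.transpose)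
            ((X ^ N - 1 : Polynomial F) • (1 : Matrix (Fin ℓ) (Fin ℓ) (Polynomial F))) r))
      Qm)
    (hPQ : P * Qm = Matrix.diagonal (fun _ => (X ^ N - 1 : Polynomial F))) :
    IsGPM lam m (C₁ ⊓ C₂) (P.transpose * G₂) := by
  have hN0 : 0 < N := hN ▸ Finset.univ.lcm_orderOf_mul_pos hlam hm
  have hf : (X ^ N - 1 : F[X]) ≠ 0 := by simpa using X_pow_sub_C_ne_zero hN0 (1 : F)
  have hPQ' : P * Qm = (X ^ N - 1 : F[X]) • 1 := by rw [hPQ, smul_one_eq_diagonal]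
  set δ := fun i => (X ^ N - 1) / (X ^ m i - C (lam i))
  have hδ : diagonal δ * diagonal (fun i => X ^ m i - C (lam i)) = (X ^ N - 1 : F[X]) • 1 := by
    rw [diagonal_mul_diagonal, smul_one_eq_diagonal]
    congr 1
    funext i
    rw [mul_comm]
    exact EuclideanDomain.mul_div_cancel' (X_pow_sub_C_ne_zero (hm i) _)
      (X_pow_sub_C_dvd_X_pow_sub_one (hN ▸ Finset.dvd_lcm (Finset.mem_univ i)))
  have hQrows : A₁ᵀ * diagonal δ * G₂ᵀ = (G₂ * (diagonal δ * A₁))ᵀ := by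
    rw [transpose_mul, transpose_mul, diagonal_transpose, Matrix.mul_assoc]
  rw [hQrows] at hQ
  have hQspan : Submodule.span F[X] (Set.range Qm.row) = Submodule.span F[X]
      (Set.range (fromRows (G₂ * (diagonal δ * A₁))ᵀ ((X ^ N - 1 : F[X]) • 1)).row) :=
    SetLike.coe_injective <| hQ.2.trans <| Set.ext <| toCode_mem_genCode_iff (fun _ => hN0) _
      fun q hq => mem_span_range_row_fromRows_smul_one _ (by simpa using hq)
  have hspan := span_range_row_transpose_mul_eq_inf hf (linearIndependent_row_iff.mp hG₁.1)
    (by rw [Matrix.mul_assoc, hA₁, hδ]) hPQ' hQspan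
  have hP : Pᵀ.Nonsingular := (nonsingular_of_mul_eq_smul_one hf hPQ').1.transpose
  refine ⟨linearIndependent_row_iff.mpr
    (nonsingular_mul_iff.mpr ⟨hP, linearIndependent_row_iff.mp hG₂.1⟩), ?_⟩
  exact (congrArg SetLike.coe hspan).trans (congrArg₂ (· ∩ ·) hG₁.2 hG₂.2)

/-- Let `C₁, C₂` be Λ-MT codes with GPMs `G₁, G₂` and identical-equation
matrices `A₁, A₂`.  Let `N = lcm(tᵢ mᵢ)` (`tᵢ` the multiplicative order of `λᵢ`), let `Q`
be the quasi-cyclic code of index `ℓ` and co-index `N` generated by the rows of the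
stacked matrix `[A₁ᵀ · diag((x^N-1)/(x^{mᵢ}-λᵢ)) · G₂ᵀ ; (x^N-1)·I_ℓ]`, let `Qm` be a GPM
of `Q` and `P` satisfy `P·Qm = (x^N-1)·I_ℓ`.  Then `Pᵀ·G₂` is a GPM of `C₁ ∩ C₂`. -/
theorem stmt11 {F : Type*} [Field F] [Fintype F] {ℓ : ℕ} {m : Fin ℓ → ℕ}
    (hm : ∀ i, 0 < m i) {lam : Fin ℓ → F} (hlam : ∀ i, lam i ≠ 0)
    (C₁ C₂ : Submodule F (∀ i, Fin (m i) → F))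
    (hC₁ : IsMT lam C₁) (hC₂ : IsMT lam C₂)
    (G₁ G₂ A₁ A₂ : Matrix (Fin ℓ) (Fin ℓ) (Polynomial F))
    (hG₁ : IsGPM lam m C₁ G₁) (hG₂ : IsGPM lam m C₂ G₂)
    (hA₁ : A₁ * G₁ = Matrix.diagonal (fun i => X ^ (m i) - Polynomial.C (lam i)))
    (hA₂ : A₂ * G₂ = Matrix.diagonal (fun i => X ^ (m i) - Polynomial.C (lam i)))
    {N : ℕ} (hN : N = Finset.univ.lcm (fun i => orderOf (lam i) * m i))
    (Qm P : Matrix (Fin ℓ) (Fin ℓ) (Polynomial F))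
    (hQ : IsGPM (fun _ => (1 : F)) (fun _ => N)
      (genCode (fun _ => (1 : F)) (fun _ => N)
        (fun r : Fin ℓ ⊕ Fin ℓ =>
          Matrix.fromRows
            (A₁.transpose *
              Matrix.diagonal (fun i => (X ^ N - 1) / (X ^ (m i) - Polynomial.C (lam i))) *
              G₂.transpose)
            ((X ^ N - 1 : Polynomial F) • (1 : Matrix (Fin ℓ) (Fin ℓ) (Polynomial F))) r))
      Qm)
    (hPQ : P * Qm = Matrix.diagonal (fun _ => (X ^ N - 1 : Polynomial F))) :
    IsGPM lam m (C₁ ⊓ C₂) (P.transpose * G₂) :=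
  stmt11_general hm hlam C₁ C₂ G₁ G₂ A₁ hG₁ hG₂ hA₁ hN Qm P hQ hPQ
end

section
/- Let C_1 and C_2 be Λ-MT codes over F_q with index ℓ, block lengths (m_1,…,m_ℓ), GPMs G_1, G_2 and identical-equation matrices A_1, A_2, and let N = lcm(t_1 m_1,…,t_ℓ m_ℓ). Then the inclusion C_1 ⊆ C_2 holds if and only if every entry of the polynomial matrix G_1·diag((x^N−1)/(x^{m_i}−λ_i))·A_2 is divisible by x^N − 1, i.e., G_1·diag((x^N−1)/(x^{m_i}−λ_i))·A_2 ≡ 0 (mod x^N−1). -/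
open Polynomial Matrix

/-- cancel a nonzero scalar in a matrix equation over a domain. -/
private lemma matrix_smul_cancel {R : Type*} [CommRing R] [IsDomain R] {n : ℕ}
    {c : R} (hc : c ≠ 0) {M P : Matrix (Fin n) (Fin n) R} (h : c • M = c • P) : M = P := by
  ext i j
  have h' := congrFun (congrFun h i) j
  simp only [Matrix.smul_apply, smul_eq_mul] at h'
  exact mul_left_cancel₀ hc h'

/-- the key identity: if `A * G = diagonal D` with rows of `G` spanning enough (in fact we
only need the `D i` nonzero) and `f i * D i = c` for all `i`, then
`G * diagonal f * A = c • 1`. -/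
private lemma key_identity {F : Type*} [Field F] {ℓ : ℕ}
    (G A : Matrix (Fin ℓ) (Fin ℓ) (Polynomial F)) (Dv fv : Fin ℓ → Polynomial F)
    (hA : A * G = Matrix.diagonal Dv) (hD : ∀ i, Dv i ≠ 0)
    {c : Polynomial F} (hfD : ∀ i, fv i * Dv i = c) :
    G * Matrix.diagonal fv * A = c • (1 : Matrix (Fin ℓ) (Fin ℓ) (Polynomial F)) := by
  classical
  set K := FractionRing (Polynomial F)
  set φ : Polynomial F →+* K := algebraMap (Polynomial F) K with hφdef
  have hφ : Function.Injective φ := IsFractionRing.injective (Polynomial F) K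
  -- it suffices to prove the identity after mapping to the fraction field
  suffices hsuf : (G * Matrix.diagonal fv * A).map φ =
      ((c • (1 : Matrix (Fin ℓ) (Fin ℓ) (Polynomial F)))).map φ by
    exact Matrix.map_injective hφ hsuf
  have hmap : ∀ M P : Matrix (Fin ℓ) (Fin ℓ) (Polynomial F),
      (M * P).map φ = M.map φ * P.map φ := fun M P => by
    simpa using (RingHom.mapMatrix (m := Fin ℓ) φ).map_mul M P
  have hdiagmap : ∀ d : Fin ℓ → Polynomial F,
      (Matrix.diagonal d).map φ = Matrix.diagonal (fun i => φ (d i)) :=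
    fun d => Matrix.diagonal_map (map_zero φ)
  have hA' : A.map φ * G.map φ = Matrix.diagonal (fun i => φ (Dv i)) := by
    rw [← hmap, hA, hdiagmap]
  -- `A.map φ` is invertible
  have hdet : IsUnit (A.map φ).det := by
    have h1 : (A.map φ).det * (G.map φ).det = ∏ i, φ (Dv i) := by
      rw [← Matrix.det_mul, hA', Matrix.det_diagonal]
    have h2 : (∏ i, φ (Dv i)) ≠ 0 := by
      apply Finset.prod_ne_zero_iff.mpr
      intro i _
      simpa [map_zero] using fun h => hD i (hφ (by simpa using h))
    rw [isUnit_iff_ne_zero]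
    intro h0
    rw [h0, zero_mul] at h1
    exact h2 h1.symm
  have hunit : IsUnit (A.map φ) := (Matrix.isUnit_iff_isUnit_det _).mpr hdet
  -- compute `A' * (G' * diag f' * A') = A' * (φ c • 1)` and cancel
  have hcalc : A.map φ * (G.map φ * Matrix.diagonal (fun i => φ (fv i)) * A.map φ)
      = A.map φ * (φ c • (1 : Matrix (Fin ℓ) (Fin ℓ) K)) := by
    calc A.map φ * (G.map φ * Matrix.diagonal (fun i => φ (fv i)) * A.map φ)
        = (A.map φ * G.map φ) * Matrix.diagonal (fun i => φ (fv i)) * A.map φ := by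
          rw [← mul_assoc, ← mul_assoc]
      _ = Matrix.diagonal (fun i => φ (Dv i)) * Matrix.diagonal (fun i => φ (fv i))
            * A.map φ := by rw [hA']
      _ = Matrix.diagonal (fun i => φ (Dv i) * φ (fv i)) * A.map φ := by
          rw [Matrix.diagonal_mul_diagonal]
      _ = Matrix.diagonal (fun _ : Fin ℓ => φ c) * A.map φ := by
          have hfun : (fun i => φ (Dv i) * φ (fv i)) = fun _ : Fin ℓ => φ c := by
            funext i
            rw [← _root_.map_mul, mul_comm, hfD i]
          rw [hfun]
      _ = (φ c • (1 : Matrix (Fin ℓ) (Fin ℓ) K)) * A.map φ := by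
          rw [Matrix.smul_one_eq_diagonal]
      _ = φ c • A.map φ := by rw [smul_mul_assoc, one_mul]
      _ = A.map φ * (φ c • (1 : Matrix (Fin ℓ) (Fin ℓ) K)) := by
          rw [mul_smul_comm, mul_one]
  have hfin : G.map φ * Matrix.diagonal (fun i => φ (fv i)) * A.map φ
      = φ c • (1 : Matrix (Fin ℓ) (Fin ℓ) K) := hunit.mul_left_cancel hcalc
  calc (G * Matrix.diagonal fv * A).map φ
      = G.map φ * Matrix.diagonal (fun i => φ (fv i)) * A.map φ := by
        rw [hmap, hmap, hdiagmap]
    _ = φ c • (1 : Matrix (Fin ℓ) (Fin ℓ) K) := hfin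
    _ = (c • (1 : Matrix (Fin ℓ) (Fin ℓ) (Polynomial F))).map φ := by
        ext i j
        simp [Matrix.smul_apply, Matrix.one_apply, Matrix.map_apply, apply_ite φ]

/-- Let `C₁, C₂` be Λ-MT codes with GPMs `G₁, G₂` and identical-equation
matrices `A₁, A₂`, and `N = lcm(tᵢ mᵢ)`.  Then `C₁ ⊆ C₂` iff every entry of
`G₁·diag((x^N-1)/(x^{mᵢ}-λᵢ))·A₂` is divisible by `x^N - 1`. -/
theorem stmt15 {F : Type*} [Field F] [Fintype F] {ℓ : ℕ} {m : Fin ℓ → ℕ}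
    (hm : ∀ i, 0 < m i) {lam : Fin ℓ → F} (hlam : ∀ i, lam i ≠ 0)
    (C₁ C₂ : Submodule F (∀ i, Fin (m i) → F))
    (hC₁ : IsMT lam C₁) (hC₂ : IsMT lam C₂)
    (G₁ G₂ A₁ A₂ : Matrix (Fin ℓ) (Fin ℓ) (Polynomial F))
    (hG₁ : IsGPM lam m C₁ G₁) (hG₂ : IsGPM lam m C₂ G₂)
    (hA₁ : A₁ * G₁ = Matrix.diagonal (fun i => X ^ (m i) - Polynomial.C (lam i)))
    (hA₂ : A₂ * G₂ = Matrix.diagonal (fun i => X ^ (m i) - Polynomial.C (lam i)))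
    {N : ℕ} (hN : N = Finset.univ.lcm (fun i => orderOf (lam i) * m i)) :
    C₁ ≤ C₂ ↔
      ∀ i j : Fin ℓ, (X ^ N - 1 : Polynomial F) ∣
        ((G₁ *
          Matrix.diagonal (fun i => (X ^ N - 1) / (X ^ (m i) - Polynomial.C (lam i))) *
          A₂ : Matrix (Fin ℓ) (Fin ℓ) (Polynomial F))) i j := by
  classical
  -- notation
  set Dv : Fin ℓ → Polynomial F := fun i => X ^ (m i) - Polynomial.C (lam i) with hDv
  set fv : Fin ℓ → Polynomial F := fun i => (X ^ N - 1) / (X ^ (m i) - Polynomial.C (lam i))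
    with hfv
  have hmonic : ∀ i, (Dv i).Monic := fun i => monic_X_pow_sub_C _ (hm i).ne'
  have hDne : ∀ i, Dv i ≠ 0 := fun i => (hmonic i).ne_zero
  -- `N ≠ 0`
  have horder : ∀ i, orderOf (lam i) ≠ 0 := by
    intro i
    have := orderOf_units (y := Units.mk0 (lam i) (hlam i))
    simp only [Units.val_mk0] at this
    rw [this]
    exact (orderOf_pos _).ne'
  have hNne : N ≠ 0 := by
    rw [hN]
    intro h
    obtain ⟨i, -, hi⟩ := Finset.lcm_eq_zero_iff.mp h
    exact (Nat.mul_ne_zero (horder i) (hm i).ne') hi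
  -- `X^N - 1 ≠ 0`
  have hcne : (X ^ N - 1 : Polynomial F) ≠ 0 := by
    have : ((X : Polynomial F) ^ N - Polynomial.C 1).Monic := monic_X_pow_sub_C _ hNne
    simpa using this.ne_zero
  -- divisibility `Dv i ∣ X^N - 1`
  have hdvdD : ∀ i, Dv i ∣ (X ^ N - 1 : Polynomial F) := by
    intro i
    have hdn : orderOf (lam i) * m i ∣ N := hN ▸ Finset.dvd_lcm (Finset.mem_univ i)
    obtain ⟨c, hc⟩ := hdn
    have hexp : m i * (orderOf (lam i) * c) = N := by rw [hc]; ring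
    have hlpow : (lam i) ^ (orderOf (lam i) * c) = 1 := by
      rw [pow_mul, pow_orderOf_eq_one, one_pow]
    have hrw : (X ^ N - 1 : Polynomial F)
        = (X ^ (m i)) ^ (orderOf (lam i) * c)
          - (Polynomial.C (lam i)) ^ (orderOf (lam i) * c) := by
      rw [← pow_mul, hexp, ← Polynomial.C_pow, hlpow, Polynomial.C_1]
    rw [hrw]
    exact sub_dvd_pow_sub_pow _ _ _
  have hfD : ∀ i, fv i * Dv i = (X ^ N - 1 : Polynomial F) := by
    intro i
    have := EuclideanDomain.mul_div_cancel' (hDne i) (hdvdD i)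
    rw [mul_comm] at this
    exact this
  -- key identity for `G₂`
  have hkey : G₂ * Matrix.diagonal fv * A₂
      = (X ^ N - 1 : Polynomial F) • (1 : Matrix (Fin ℓ) (Fin ℓ) (Polynomial F)) :=
    key_identity G₂ A₂ Dv fv hA₂ hDne hfD
  -- membership translations
  have hmem₁ : ∀ q, q ∈ Submodule.span (Polynomial F) (Set.range fun i => G₁ i)
      ↔ toCode lam m q ∈ C₁ := fun q => by
    have := Set.ext_iff.mp hG₁.2 q
    simpa using this
  have hmem₂ : ∀ q, q ∈ Submodule.span (Polynomial F) (Set.range fun i => G₂ i)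
      ↔ toCode lam m q ∈ C₂ := fun q => by
    have := Set.ext_iff.mp hG₂.2 q
    simpa using this
  -- surjectivity of `toCode`
  have hsurj : ∀ v : (∀ i, Fin (m i) → F), ∃ q, toCode lam m q = v := by
    intro v
    refine ⟨fun i => ∑ j : Fin (m i), Polynomial.C (v i j) * X ^ (j : ℕ), ?_⟩
    funext i j
    have hdeglt : (∑ k : Fin (m i), Polynomial.C (v i k) * X ^ (k : ℕ)).degree
        < (X ^ (m i) - Polynomial.C (lam i)).degree := by
      rw [degree_X_pow_sub_C (hm i) (lam i)]
      exact degree_sum_fin_lt _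
    have hmod : (∑ k : Fin (m i), Polynomial.C (v i k) * X ^ (k : ℕ)) %ₘ
        (X ^ (m i) - Polynomial.C (lam i))
        = ∑ k : Fin (m i), Polynomial.C (v i k) * X ^ (k : ℕ) :=
      (Polynomial.modByMonic_eq_self_iff (monic_X_pow_sub_C _ (hm i).ne')).2 hdeglt
    simp only [toCode, hmod]
    rw [Polynomial.finset_sum_coeff]
    simp only [Polynomial.coeff_C_mul, Polynomial.coeff_X_pow]
    rw [Finset.sum_eq_single j]
    · simp
    · intro k _ hk
      have : (j : ℕ) ≠ (k : ℕ) := fun h => hk (Fin.ext h).symm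
      simp [this]
    · intro h; exact absurd (Finset.mem_univ j) h
  constructor
  · -- forward direction
    intro hle i j
    have hrow : ∀ i, G₁ i ∈ Submodule.span (Polynomial F) (Set.range fun k => G₂ k) := by
      intro i
      apply (hmem₂ _).mpr
      apply hle
      exact (hmem₁ _).mp (Submodule.subset_span ⟨i, rfl⟩)
    choose B hB using fun i => (Submodule.mem_span_range_iff_exists_fun (Polynomial F)).mp (hrow i)
    have hBG : (Matrix.of B) * G₂ = G₁ := by
      refine Matrix.ext fun i' j' => ?_
      rw [Matrix.mul_apply]
      have := congrFun (hB i') j'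
      simpa [Finset.sum_apply, Pi.smul_apply, smul_eq_mul] using this
    have : G₁ * Matrix.diagonal fv * A₂
        = (X ^ N - 1 : Polynomial F) • (Matrix.of B) := by
      calc G₁ * Matrix.diagonal fv * A₂
          = Matrix.of B * (G₂ * Matrix.diagonal fv * A₂) := by
            rw [← hBG]; rw [← mul_assoc, ← mul_assoc]
        _ = Matrix.of B * ((X ^ N - 1 : Polynomial F) • 1) := by rw [hkey]
        _ = (X ^ N - 1 : Polynomial F) • (Matrix.of B) := by
            rw [mul_smul_comm, mul_one]
    refine ⟨Matrix.of B i j, ?_⟩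
    have := congrFun (congrFun this i) j
    simpa [Matrix.smul_apply, smul_eq_mul] using this
  · -- backward direction
    intro hdvdall
    choose B hB using hdvdall
    have hPB : G₁ * Matrix.diagonal fv * A₂
        = (X ^ N - 1 : Polynomial F) • (Matrix.of B) := by
      refine Matrix.ext fun i j => ?_
      simpa [Matrix.smul_apply, smul_eq_mul] using hB i j
    have hPG : (G₁ * Matrix.diagonal fv * A₂) * G₂
        = (X ^ N - 1 : Polynomial F) • G₁ := by
      calc (G₁ * Matrix.diagonal fv * A₂) * G₂
          = G₁ * Matrix.diagonal fv * (A₂ * G₂) := by rw [mul_assoc]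
        _ = G₁ * (Matrix.diagonal fv * Matrix.diagonal Dv) := by
            rw [hA₂, mul_assoc]
        _ = G₁ * Matrix.diagonal (fun i => fv i * Dv i) := by
            rw [Matrix.diagonal_mul_diagonal]
        _ = G₁ * ((X ^ N - 1 : Polynomial F) • 1) := by
            have hfun : (fun i => fv i * Dv i) = fun _ : Fin ℓ => (X ^ N - 1 : Polynomial F) := by
              funext i; exact hfD i
            rw [hfun, Matrix.smul_one_eq_diagonal]
        _ = (X ^ N - 1 : Polynomial F) • G₁ := by rw [mul_smul_comm, mul_one]
    have hG₁eq : G₁ = (Matrix.of B) * G₂ := by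
      apply (matrix_smul_cancel hcne ?_).symm
      rw [← hPG, hPB, smul_mul_assoc]
    have hrows : ∀ i, G₁ i ∈ Submodule.span (Polynomial F) (Set.range fun k => G₂ k) := by
      intro i
      have : G₁ i = ∑ k, B i k • G₂ k := by
        funext j
        have := congrFun (congrFun hG₁eq i) j
        rw [Matrix.mul_apply] at this
        simpa [Finset.sum_apply, Pi.smul_apply, smul_eq_mul] using this
      rw [this]
      exact Submodule.sum_mem _ fun k _ =>
        Submodule.smul_mem _ _ (Submodule.subset_span ⟨k, rfl⟩)
    intro v hv
    obtain ⟨q, rfl⟩ := hsurj v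
    have hq₁ : q ∈ Submodule.span (Polynomial F) (Set.range fun i => G₁ i) :=
      (hmem₁ q).mpr hv
    have hle' : Submodule.span (Polynomial F) (Set.range fun i => G₁ i)
        ≤ Submodule.span (Polynomial F) (Set.range fun k => G₂ k) := by
      rw [Submodule.span_le]
      rintro _ ⟨i, rfl⟩
      exact hrows i
    exact (hmem₂ q).mp (hle' hq₁)
end
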